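/- Let V : ℝ³ → ℝ be continuous with V(λx) = λ^s V(x) for all λ > 0 and some s > 2, and V(x) > 0 for |x| = 1, and let 𝓜 be the set of minimizers of W(x) = V(x) − (1/4) r(x)². Let γ_n → 0⁺, and suppose μ is a Borel probability measure on ℝ³ such that ∫ f(x) ρ^TF_{γ_n,1}(x) dx → ∫ f dμ for every bounded continuous f : ℝ³ → ℝ. Then μ(𝓜) = 1. -/

import Mathlib

/-!
With `W = V − r²/4` the density is `ρₙ = (cₙ − W)₊ / (2γₙ)`. Homogeneity gives
`V x ≥ (min_{|u|=1} V) |x|^s` with `s > 2`, while `r ≤ |x|`, so `W → ∞` at infinity and attains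
its minimum `m`. Unit mass means `∫ (cₙ − W)₊ = 2γₙ → 0`; as `(cₙ − W)₊ ≥ δ/2` near a minimizer
whenever `cₙ ≥ m + δ`, eventually `cₙ < m + δ`. Hence `ρₙ` eventually vanishes on `{W > m + ε}`,
and testing the weak convergence against `min ((W − m − ε)₊) 1` gives `μ {W > m + ε} = 0` for
every `ε > 0`.
-/

open MeasureTheory Filter Topology

noncomputable section

/-- Three-dimensional Euclidean space. -/
abbrev E3 := EuclideanSpace ℝ (Fin 3)

/-- The distance `r(x) = √(x₁² + x₂²)` from `x` to the `x₃`-axis. -/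
def rax (x : E3) : ℝ := Real.sqrt (x 0 ^ 2 + x 1 ^ 2)

/-- The integrand of the 3D Thomas–Fermi functional:
`V ρ − (Ω²/4) r² ρ + g ρ²`. -/
def tfIntegrand (V : E3 → ℝ) (g Ω : ℝ) (ρ : E3 → ℝ) (x : E3) : ℝ :=
  V x * ρ x - Ω ^ 2 / 4 * rax x ^ 2 * ρ x + g * ρ x ^ 2

/-- Admissible densities for the 3D Thomas–Fermi problem: measurable, nonnegative,
in `L¹ ∩ L²`, with finite potential terms and unit mass. -/
def tfAdmissible (V : E3 → ℝ) (ρ : E3 → ℝ) : Prop :=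
  Measurable ρ ∧ (∀ x, 0 ≤ ρ x) ∧ Integrable ρ ∧ Integrable (fun x => ρ x ^ 2) ∧
    Integrable (fun x => V x * ρ x) ∧ Integrable (fun x => rax x ^ 2 * ρ x) ∧
    (∫ x, ρ x) = 1

/-- The 3D Thomas–Fermi energy `E^TF_{g,Ω}`. -/
def ETF (V : E3 → ℝ) (g Ω : ℝ) : ℝ :=
  sInf { e | ∃ ρ : E3 → ℝ, tfAdmissible V ρ ∧ e = ∫ x, tfIntegrand V g Ω ρ x }

/-- The candidate Thomas–Fermi minimizer with chemical potential `μ`: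
`ρ^TF_{g,Ω}(x) = (1/(2g)) [μ + (Ω²/4) r(x)² − V(x)]₊`. -/
def rhoTF (V : E3 → ℝ) (g Ω μ : ℝ) (x : E3) : ℝ :=
  1 / (2 * g) * max (μ + Ω ^ 2 / 4 * rax x ^ 2 - V x) 0

/-- Homogeneity of degree `s`: `V(λx) = λ^s V(x)` for all `λ > 0`. -/
def Homogeneous (V : E3 → ℝ) (s : ℝ) : Prop :=
  ∀ lam : ℝ, 0 < lam → ∀ x : E3, V (lam • x) = lam ^ s * V x

/-- The effective potential `W(x) = V(x) − (1/4) r(x)²`. -/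
def Wpot (V : E3 → ℝ) (x : E3) : ℝ := V x - 1 / 4 * rax x ^ 2

theorem continuous_rax : Continuous rax := by
  unfold rax; fun_prop

theorem rax_sq_le_norm_sq (x : E3) : rax x ^ 2 ≤ ‖x‖ ^ 2 := by
  rw [rax, Real.sq_sqrt (by positivity), EuclideanSpace.norm_sq_eq, Fin.sum_univ_three]
  simp only [Real.norm_eq_abs, sq_abs]
  nlinarith [sq_nonneg (x 2)]

theorem continuous_Wpot {V : E3 → ℝ} (hV : Continuous V) : Continuous (Wpot V) :=
  hV.sub (continuous_const.mul (continuous_rax.pow 2))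

theorem Homogeneous.mul_rpow_norm_le {V : E3 → ℝ} {s v : ℝ} (hV : Homogeneous V s)
    (hv : ∀ u : E3, ‖u‖ = 1 → v ≤ V u) {x : E3} (hx : x ≠ 0) : v * ‖x‖ ^ s ≤ V x := by
  have hx' : 0 < ‖x‖ := norm_pos_iff.mpr hx
  have hunit : ‖‖x‖⁻¹ • x‖ = 1 := by
    rw [norm_smul, norm_inv, norm_norm, inv_mul_cancel₀ hx'.ne']
  have hVx : V x = ‖x‖ ^ s * V (‖x‖⁻¹ • x) := by
    rw [← hV _ hx', smul_smul, mul_inv_cancel₀ hx'.ne', one_smul]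
  rw [hVx, mul_comm]
  exact mul_le_mul_of_nonneg_left (hv _ hunit) (by positivity)

theorem tendsto_mul_rpow_sub_sq_atTop {s v : ℝ} (hs : 2 < s) (hv : 0 < v) :
    Tendsto (fun t : ℝ => v * t ^ s - 1 / 4 * t ^ 2) atTop atTop := by
  have hfactor : Tendsto (fun t : ℝ => t ^ 2 * (v * t ^ (s - 2) - 1 / 4)) atTop atTop :=
    (tendsto_pow_atTop two_ne_zero).atTop_mul_atTop₀ <|
      tendsto_atTop_add_const_right _ _ <| (tendsto_rpow_atTop (by linarith)).const_mul_atTop hv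
  refine hfactor.congr' ?_
  filter_upwards [eventually_gt_atTop 0] with t ht
  rw [mul_sub, ← mul_assoc, mul_comm (t ^ 2) v, mul_assoc, ← Real.rpow_natCast t 2,
    ← Real.rpow_add ht]
  norm_num
  ring

theorem Homogeneous.tendsto_Wpot_cocompact {V : E3 → ℝ} {s : ℝ} (hVc : Continuous V)
    (hs : 2 < s) (hV : Homogeneous V s) (hVpos : ∀ x : E3, ‖x‖ = 1 → 0 < V x) :
    Tendsto (Wpot V) (cocompact E3) atTop := by
  obtain ⟨u, hu, hmin⟩ := (isCompact_sphere (0 : E3) 1).exists_isMinOn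
    (NormedSpace.sphere_nonempty.mpr zero_le_one) hVc.continuousOn
  have hu : ‖u‖ = 1 := mem_sphere_zero_iff_norm.mp hu
  have hlower : ∀ x : E3, x ≠ 0 → V u * ‖x‖ ^ s - 1 / 4 * ‖x‖ ^ 2 ≤ Wpot V x := by
    intro x hx
    have := hV.mul_rpow_norm_le (fun y hy => hmin (mem_sphere_zero_iff_norm.mpr hy)) hx
    have := rax_sq_le_norm_sq x
    unfold Wpot
    linarith
  refine tendsto_atTop_mono' _ ?_
    ((tendsto_mul_rpow_sub_sq_atTop hs (hVpos u hu)).comp tendsto_norm_cocompact_atTop)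
  filter_upwards [(tendsto_norm_cocompact_atTop (E := E3)).eventually (eventually_gt_atTop 0)]
    with x hx
  exact hlower x (norm_pos_iff.mp hx)

theorem rhoTF_one_eq (V : E3 → ℝ) (g c : ℝ) (x : E3) :
    rhoTF V g 1 c x = 1 / (2 * g) * max (c - Wpot V x) 0 := by
  rw [rhoTF, Wpot]
  ring_nf

theorem rhoTF_one_eq_zero_of_le {V : E3 → ℝ} {g c : ℝ} {x : E3} (hx : c ≤ Wpot V x) :
    rhoTF V g 1 c x = 0 := by
  rw [rhoTF_one_eq, max_eq_right (sub_nonpos.mpr hx), mul_zero]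

theorem integral_max_sub_Wpot_of_integral_rhoTF_eq_one {V : E3 → ℝ} {g c : ℝ}
    (h : ∫ x, rhoTF V g 1 c x = 1) :
    Integrable (fun x => max (c - Wpot V x) 0) ∧ ∫ x, max (c - Wpot V x) 0 = 2 * g := by
  simp_rw [rhoTF_one_eq, integral_const_mul] at h
  -- `1 / (2 * 0) = 0`, so unit mass already excludes `g = 0`
  have hg : 2 * g ≠ 0 := by
    rintro hg
    simp [hg] at h
  have hI : ∫ x, max (c - Wpot V x) 0 = 2 * g :=
    ((inv_mul_eq_one₀ hg).mp (one_div (2 * g) ▸ h)).symm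
  exact ⟨Integrable.of_integral_ne_zero (hI ▸ hg), hI⟩

section Concentration

variable {X : Type*} [TopologicalSpace X] [MeasurableSpace X] [OpensMeasurableSpace X]
  {W : X → ℝ}

theorem eventually_lt_of_tendsto_integral_max_sub {ν : Measure X} [ν.IsOpenPosMeasure]
    [IsLocallyFiniteMeasure ν] (hW : Continuous W) {c : ℕ → ℝ}
    (hint : ∀ n, Integrable (fun x => max (c n - W x) 0) ν)
    (hlim : Tendsto (fun n => ∫ x, max (c n - W x) 0 ∂ν) atTop (𝓝 0))
    (x₀ : X) {δ : ℝ} (hδ : 0 < δ) : ∀ᶠ n in atTop, c n < W x₀ + δ := by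
  obtain ⟨s, hx₀s, hs, hsfin⟩ := ν.exists_isOpen_measure_lt_top x₀
  set U := s ∩ {x | W x < W x₀ + δ / 2}
  have hU : IsOpen U := hs.inter (isOpen_lt hW continuous_const)
  have hUfin : ν U ≠ ⊤ := (measure_mono Set.inter_subset_left).trans_lt hsfin |>.ne
  have hUpos : 0 < ν.real U :=
    ENNReal.toReal_pos (hU.measure_ne_zero ν ⟨x₀, hx₀s, by simp [hδ]⟩) hUfin
  filter_upwards [hlim.eventually_lt_const (by positivity : 0 < δ / 2 * ν.real U)] with n hn
  by_contra! hcn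
  have hbound : ∀ x ∈ U, δ / 2 ≤ max (c n - W x) 0 := fun x hx =>
    le_max_of_le_left (by linarith [hx.2.out])
  have := setIntegral_ge_of_const_le_real hU.measurableSet hUfin hbound (hint n).integrableOn
  have := setIntegral_le_integral (s := U) (hint n) (.of_forall fun x => le_max_right _ _)
  linarith

variable {ν μ : Measure X} [IsFiniteMeasure μ] {ρ : ℕ → X → ℝ}

theorem ae_le_of_eventually_eq_zero_of_lt (hW : Continuous W)
    (hweak : ∀ f : X → ℝ, Continuous f → (∃ C : ℝ, ∀ x, |f x| ≤ C) →
      Tendsto (fun n => ∫ x, f x * ρ n x ∂ν) atTop (𝓝 (∫ x, f x ∂μ)))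
    {a : ℝ} (hvanish : ∀ᶠ n in atTop, ∀ x, a < W x → ρ n x = 0) : ∀ᵐ x ∂μ, W x ≤ a := by
  set f : X → ℝ := fun x => min (max (W x - a) 0) 1
  have hf : Continuous f := by fun_prop
  have hf_nonneg : ∀ x, 0 ≤ f x := fun x => le_min (le_max_right _ _) zero_le_one
  have hf_abs : ∀ x, |f x| ≤ 1 := fun x =>
    abs_le.mpr ⟨by linarith [hf_nonneg x], min_le_right _ _⟩
  have hpos : ∀ x, a < W x → 0 < f x := fun x hx =>
    lt_min (lt_max_of_lt_left (sub_pos.mpr hx)) one_pos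
  have hzero : ∀ᶠ n in atTop, ∫ x, f x * ρ n x ∂ν = 0 := by
    filter_upwards [hvanish] with n hn
    refine integral_eq_zero_of_ae (.of_forall fun x => ?_)
    by_cases hx : a < W x
    · simp [hn x hx]
    · simp [f, max_eq_right (sub_nonpos.mpr (not_lt.mp hx))]
  have hint : ∫ x, f x ∂μ = 0 :=
    tendsto_nhds_unique (hweak f hf ⟨1, hf_abs⟩) (tendsto_const_nhds.congr' (hzero.mono
      fun n hn => hn.symm))
  have hfi : Integrable f μ := .of_bound hf.aestronglyMeasurable 1 (.of_forall hf_abs)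
  filter_upwards [(integral_eq_zero_iff_of_nonneg hf_nonneg hfi).mp hint] with x hx
  exact not_lt.mp fun h => (hpos x h).ne' hx

theorem ae_le_of_forall_eventually_eq_zero (hW : Continuous W)
    (hweak : ∀ f : X → ℝ, Continuous f → (∃ C : ℝ, ∀ x, |f x| ≤ C) →
      Tendsto (fun n => ∫ x, f x * ρ n x ∂ν) atTop (𝓝 (∫ x, f x ∂μ)))
    {m : ℝ} (hvanish : ∀ ε > 0, ∀ᶠ n in atTop, ∀ x, m + ε < W x → ρ n x = 0) :
    ∀ᵐ x ∂μ, W x ≤ m := by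
  have hseq : ∀ k : ℕ, ∀ᵐ x ∂μ, W x ≤ m + 1 / ((k : ℝ) + 1) := fun k =>
    ae_le_of_eventually_eq_zero_of_lt hW hweak (hvanish _ Nat.one_div_pos_of_nat)
  filter_upwards [ae_all_iff.mpr hseq] with x hx
  exact ge_of_tendsto' (by simpa using tendsto_one_div_add_atTop_nhds_zero_nat.const_add m) hx

end Concentration

theorem tf3_density_concentration_general (V : E3 → ℝ) (hVc : Continuous V)
    (s : ℝ) (hs : 2 < s) (hhom : Homogeneous V s)
    (hVpos : ∀ x : E3, ‖x‖ = 1 → 0 < V x)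
    (γ : ℕ → ℝ) (hγ0 : Tendsto γ atTop (𝓝 0))
    (c : ℕ → ℝ) (hc : ∀ n, (∫ x, rhoTF V (γ n) 1 (c n) x) = 1)
    (μ : Measure E3) [IsProbabilityMeasure μ]
    (hweak : ∀ f : E3 → ℝ, Continuous f → (∃ C : ℝ, ∀ x, |f x| ≤ C) →
      Tendsto (fun n => ∫ x, f x * rhoTF V (γ n) 1 (c n) x) atTop (𝓝 (∫ x, f x ∂μ))) :
    μ {x : E3 | ∀ y : E3, Wpot V x ≤ Wpot V y} = 1 := by
  have hW := continuous_Wpot hVc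
  obtain ⟨x₀, hx₀⟩ := hW.exists_forall_le (hhom.tendsto_Wpot_cocompact hVc hs hVpos)
  have hmass n := integral_max_sub_Wpot_of_integral_rhoTF_eq_one (hc n)
  have hchem : ∀ δ > 0, ∀ᶠ n in atTop, c n < Wpot V x₀ + δ := fun δ hδ =>
    eventually_lt_of_tendsto_integral_max_sub hW (fun n => (hmass n).1)
      (by simpa [(hmass _).2] using hγ0.const_mul 2) x₀ hδ
  have hae : ∀ᵐ x ∂μ, Wpot V x ≤ Wpot V x₀ :=
    ae_le_of_forall_eventually_eq_zero hW hweak fun ε hε => (hchem ε hε).mono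
      fun n hn x hx => rhoTF_one_eq_zero_of_le (by linarith)
  have hmin : {x : E3 | ∀ y, Wpot V x ≤ Wpot V y} = {x | Wpot V x ≤ Wpot V x₀} :=
    Set.ext fun x => ⟨fun hx => hx x₀, fun hx y => hx.trans (hx₀ y)⟩
  rw [hmin, ← measure_univ (μ := μ)]
  exact (ae_iff_measure_eq
    (measurableSet_le hW.measurable measurable_const).nullMeasurableSet).mp hae

/-- **Concentration of the Thomas–Fermi densities on the minimizing set `𝓜` of
`W = V − r²/4` in the ultrarapid-rotation limit**: if `γ_n → 0⁺` and the normalized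
minimizers `ρ^TF_{γ_n,1}` converge weakly (against bounded continuous functions) to a
Borel probability measure `μ`, then `μ(𝓜) = 1`. -/
theorem tf3_density_concentration (V : E3 → ℝ) (hVc : Continuous V)
    (s : ℝ) (hs : 2 < s) (hhom : Homogeneous V s)
    (hVpos : ∀ x : E3, ‖x‖ = 1 → 0 < V x)
    (γ : ℕ → ℝ) (hγpos : ∀ n, 0 < γ n) (hγ0 : Tendsto γ atTop (𝓝 0))
    (c : ℕ → ℝ) (hc : ∀ n, (∫ x, rhoTF V (γ n) 1 (c n) x) = 1)
    (μ : Measure E3) [IsProbabilityMeasure μ]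
    (hweak : ∀ f : E3 → ℝ, Continuous f → (∃ C : ℝ, ∀ x, |f x| ≤ C) →
      Tendsto (fun n => ∫ x, f x * rhoTF V (γ n) 1 (c n) x) atTop (𝓝 (∫ x, f x ∂μ))) :
    μ {x : E3 | ∀ y : E3, Wpot V x ≤ Wpot V y} = 1 :=
  tf3_density_concentration_general V hVc s hs hhom hVpos γ hγ0 c hc μ hweak
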